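/- Let R be a (not necessarily commutative) ring and let a, a′, b, b′ ∈ R satisfy a² = a′² = b² = b′² = 1 and suppose each of a, a′ commutes with each of b, b′. Put s₁ = ab + ab′ + a′b − a′b′ and s₂ = ab + ab′ − a′b + a′b′. Then s₁² = 4·1 − (aa′ − a′a)(bb′ − b′b) and s₂² = 4·1 + (aa′ − a′a)(bb′ − b′b). -/
import Mathlib

private lemma swap_assoc {R : Type*} [Ring R] {x y : R} (h : Commute x y) (z : R) :
    y * (x * z) = x * (y * z) := by rw [← mul_assoc, ← h.eq, mul_assoc]

private lemma sq_cancel {R : Type*} [Ring R] {x : R} (h : x * x = 1) (z : R) :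
    x * (x * z) = z := by rw [← mul_assoc, h, one_mul]

theorem landau_identities
    {R : Type*} [Ring R] (a a' b b' : R)
    (ha2 : a * a = 1) (ha'2 : a' * a' = 1)
    (hb2 : b * b = 1) (hb'2 : b' * b' = 1)
    (hab : Commute a b) (hab' : Commute a b')
    (ha'b : Commute a' b) (ha'b' : Commute a' b') :
    (a * b + a * b' + a' * b - a' * b') * (a * b + a * b' + a' * b - a' * b')
      = 4 * 1 - (a * a' - a' * a) * (b * b' - b' * b) ∧
    (a * b + a * b' - a' * b + a' * b') * (a * b + a * b' - a' * b + a' * b')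
      = 4 * 1 + (a * a' - a' * a) * (b * b' - b' * b) := by
  constructor <;>
  · simp only [mul_add, add_mul, mul_sub, sub_mul, mul_one, one_mul, mul_assoc,
      swap_assoc hab, swap_assoc hab', swap_assoc ha'b, swap_assoc ha'b',
      sq_cancel ha2, sq_cancel ha'2, sq_cancel hb2, sq_cancel hb'2, ha2, ha'2, hb2, hb'2]
    abel_nf
    norm_num
    abel
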